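/- arXiv:2106.02203 — 9 statements merged into one kernel-verified Lean document; each statement's English description precedes it below -/
import Mathlib

section
/- Let p, d, a, a_1, a_2, q be natural numbers with d ≥ 1 and a_1 + a_2 = a + q·p. Write r_1 = a_1 % d, r_2 = a_2 % d, α_a = a/d, r_a = a % d, α_p = p/d, r_p = p % d. Define b_1 = (a_1 + (d − 1) − r_p)/d and b_2 = a_2/d (floor divisions in ℕ; note a_1 + (d−1) − r_p ≥ 0 since r_p ≤ d−1). Then, as integers, b_1 + b_2 − (α_p + 1)·q + 1 = α_a − q + 1 + (r_a + q·r_p − r_1 − r_2)/d + (r_1 + (d − 1) − r_p)/d, where the quotient (r_a + q·r_p − r_1 − r_2)/d is exact integer division of a multiple of d and (r_1 + (d−1) − r_p)/d is floor division in ℕ. -/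
/-- Eq. (3)/(4) of the paper: reconstruction of the output of the passively secure
division protocol (Protocol 1), showing the term `q·α_p` is eliminated. -/
theorem stmt_1 (p d a a₁ a₂ q : ℕ) (hd : 1 ≤ d) (hshare : a₁ + a₂ = a + q * p) :
    (((a₁ + (d - 1) - p % d) / d : ℕ) : ℤ) + ((a₂ / d : ℕ) : ℤ)
        - (((p / d : ℕ) : ℤ) + 1) * (q : ℤ) + 1
      = ((a / d : ℕ) : ℤ) - (q : ℤ) + 1
        + (((a % d : ℕ) : ℤ) + (q : ℤ) * ((p % d : ℕ) : ℤ)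
            - ((a₁ % d : ℕ) : ℤ) - ((a₂ % d : ℕ) : ℤ)) / (d : ℤ)
        + (((a₁ % d + (d - 1) - p % d) / d : ℕ) : ℤ) := by
  have hdpos : 0 < d := hd
  have hrp : p % d ≤ d - 1 := Nat.le_sub_one_of_lt (Nat.mod_lt _ hdpos)
  -- split the first quotient
  have h1 : (a₁ + (d - 1) - p % d) / d = a₁ / d + (a₁ % d + (d - 1) - p % d) / d := by
    have e : a₁ + (d - 1) - p % d = d * (a₁ / d) + (a₁ % d + (d - 1) - p % d) := by
      have := Nat.div_add_mod a₁ d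
      omega
    rw [e, Nat.mul_add_div hdpos]
  -- exact division
  have key : ((a % d : ℕ) : ℤ) + (q : ℤ) * ((p % d : ℕ) : ℤ)
      - ((a₁ % d : ℕ) : ℤ) - ((a₂ % d : ℕ) : ℤ)
      = (d : ℤ) * (((a₁ / d : ℕ) : ℤ) + ((a₂ / d : ℕ) : ℤ)
          - ((a / d : ℕ) : ℤ) - (q : ℤ) * ((p / d : ℕ) : ℤ)) := by
    have h₁ : (d : ℤ) * ((a₁ / d : ℕ) : ℤ) + ((a₁ % d : ℕ) : ℤ) = (a₁ : ℤ) := by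
      exact_mod_cast congrArg (Nat.cast : ℕ → ℤ) (Nat.div_add_mod a₁ d)
    have h₂ : (d : ℤ) * ((a₂ / d : ℕ) : ℤ) + ((a₂ % d : ℕ) : ℤ) = (a₂ : ℤ) := by
      exact_mod_cast congrArg (Nat.cast : ℕ → ℤ) (Nat.div_add_mod a₂ d)
    have h₃ : (d : ℤ) * ((a / d : ℕ) : ℤ) + ((a % d : ℕ) : ℤ) = (a : ℤ) := by
      exact_mod_cast congrArg (Nat.cast : ℕ → ℤ) (Nat.div_add_mod a d)
    have h₄ : (d : ℤ) * ((p / d : ℕ) : ℤ) + ((p % d : ℕ) : ℤ) = (p : ℤ) := by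
      exact_mod_cast congrArg (Nat.cast : ℕ → ℤ) (Nat.div_add_mod p d)
    have hs : (a₁ : ℤ) + a₂ = a + q * p := by exact_mod_cast hshare
    nlinarith [h₁, h₂, h₃, h₄, hs]
  rw [key, Int.mul_ediv_cancel_left _ (by exact_mod_cast hdpos.ne' : (d : ℤ) ≠ 0), h1]
  push_cast
  ring
end

section
/- Let p, d be naturals with d ≥ 1 and p % d = d − 1. Let a, a_1, a_2 be naturals with a < p, a_1 < p, a_2 < p and a_1 + a_2 ≡ a (mod p), and let q = (a_1 + a_2 − a)/p (so q ∈ {0, 1}). Define, as an integer, b = a_1/d + a_2/d − (p/d + 1)·q + 1. Then: b = a/d if (a_1 ≤ a and a % d < a_1 % d) or (a < a_1 and a % d ≤ a_1 % d); and b = a/d + 1 otherwise. -/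
private lemma modsum (x y d : ℕ) (hx : x < d) (hy : y < d) :
    (x + y) % d = if d ≤ x + y then x + y - d else x + y := by
  split_ifs with h
  · rw [Nat.mod_eq_sub_mod h, Nat.mod_eq_of_lt (by omega)]
  · exact Nat.mod_eq_of_lt (by omega)

/-- Correctness of the passively secure division protocol in the specific case
`p % d = d − 1` (p a Mersenne prime, d a power of 2): the reconstructed output
equals `a/d` or `a/d + 1` with the stated exact condition. -/
theorem stmt_6 (p d a a₁ a₂ : ℕ) (hd : 1 ≤ d) (hpd : p % d = d - 1)
    (ha : a < p) (h1 : a₁ < p) (h2 : a₂ < p) (hshare : (a₁ + a₂) % p = a % p) :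
    (((a₁ ≤ a ∧ a % d < a₁ % d) ∨ (a < a₁ ∧ a % d ≤ a₁ % d)) →
      ((a₁ / d : ℕ) : ℤ) + ((a₂ / d : ℕ) : ℤ)
          - (((p / d : ℕ) : ℤ) + 1) * (((a₁ + a₂ - a) / p : ℕ) : ℤ) + 1
        = ((a / d : ℕ) : ℤ)) ∧
    (¬ ((a₁ ≤ a ∧ a % d < a₁ % d) ∨ (a < a₁ ∧ a % d ≤ a₁ % d)) →
      ((a₁ / d : ℕ) : ℤ) + ((a₂ / d : ℕ) : ℤ)
          - (((p / d : ℕ) : ℤ) + 1) * (((a₁ + a₂ - a) / p : ℕ) : ℤ) + 1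
        = ((a / d : ℕ) : ℤ) + 1) := by
  have hd0 : 0 < d := hd
  have hp0 : 0 < p := lt_of_le_of_lt (Nat.zero_le a) ha
  have hdm := Nat.div_add_mod (a₁ + a₂) p
  rw [hshare, Nat.mod_eq_of_lt ha] at hdm
  -- hdm : p * ((a₁+a₂)/p) + a = a₁ + a₂
  set k := (a₁ + a₂) / p with hk
  have hk1 : k ≤ 1 := by
    by_contra h
    have h2' : 2 ≤ k := by omega
    have : p * 2 ≤ p * k := Nat.mul_le_mul_left p h2'
    have : p * 2 ≤ a₁ + a₂ := by omega
    omega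
  have hQ : (a₁ + a₂ - a) / p = k := by
    have hsub : a₁ + a₂ - a = p * k := by omega
    rw [hsub, Nat.mul_div_cancel_left _ hp0]
  rw [hQ]
  have hr1 : a₁ % d < d := Nat.mod_lt _ hd0
  have hr2 : a₂ % d < d := Nat.mod_lt _ hd0
  have hra : a % d < d := Nat.mod_lt _ hd0
  have e1 : (a₁ + a₂) / d = a₁ / d + a₂ / d + if d ≤ a₁ % d + a₂ % d then 1 else 0 :=
    Nat.add_div hd0
  have e2 : (a₁ + a₂) % d = (a₁ % d + a₂ % d) % d := Nat.add_mod a₁ a₂ d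
  rw [modsum _ _ _ hr1 hr2] at e2
  interval_cases k
  · -- a₁ + a₂ = a
    have heq : a₁ + a₂ = a := by omega
    rw [heq] at e1 e2
    split_ifs at e1 e2 <;> push_cast <;> omega
  · -- a₁ + a₂ = a + p
    have heq : a₁ + a₂ = a + p := by omega
    rw [heq] at e1 e2
    have e3 : (a + p) / d = a / d + p / d + if d ≤ a % d + p % d then 1 else 0 :=
      Nat.add_div hd0
    have e4 : (a + p) % d = (a % d + p % d) % d := Nat.add_mod a p d
    rw [hpd] at e3 e4
    rw [modsum _ _ _ hra (by omega)] at e4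
    split_ifs at e1 e2 e3 e4 <;> push_cast <;> omega
end

section
/- Let p, d be naturals with d ≥ 1. Let a, a_1, a_2 be naturals with a < p, a_1 < p, a_2 < p and a_1 + a_2 ≡ a (mod p), and let q = (a_1 + a_2 − a)/p (so q ∈ {0, 1}). Write r_a = a % d, r_p = p % d, r_1 = a_1 % d, and define, as an integer, b = (a_1 + (d − 1) − r_p)/d + a_2/d − (p/d + 1)·q + 1 (floor divisions). Then: b = a/d if (a_1 ≤ a and r_a < r_1 ≤ r_p) or (a < a_1 and ((r_a + r_p < r_1) or (r_a + r_p − d < r_1 and r_1 ≤ r_p))); b = a/d + 2 if a_1 ≤ a and r_p < r_1 ≤ r_a; and b = a/d + 1 in all remaining cases (comparisons over ℤ where needed). -/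
/-- The reconstructed output of the general-case division protocol:
`b = (a₁ + (d − 1) − p % d)/d + a₂/d − (p/d + 1)·q + 1`, where
`q = (a₁ + a₂ − a)/p`. -/
def divOut (p d a a₁ a₂ : ℕ) : ℤ :=
  (((a₁ + (d - 1) - p % d) / d : ℕ) : ℤ) + ((a₂ / d : ℕ) : ℤ)
    - (((p / d : ℕ) : ℤ) + 1) * (((a₁ + a₂ - a) / p : ℕ) : ℤ) + 1

/-- Condition under which the output equals `a/d`. -/
def condZero (p d a a₁ : ℕ) : Prop :=
  (a₁ ≤ a ∧ a % d < a₁ % d ∧ a₁ % d ≤ p % d) ∨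
    (a < a₁ ∧ ((a % d + p % d < a₁ % d) ∨
      (((a % d : ℕ) : ℤ) + ((p % d : ℕ) : ℤ) - (d : ℤ) < ((a₁ % d : ℕ) : ℤ) ∧
        a₁ % d ≤ p % d)))

/-- Condition under which the output equals `a/d + 2`. -/
def condTwo (p d a a₁ : ℕ) : Prop :=
  a₁ ≤ a ∧ p % d < a₁ % d ∧ a₁ % d ≤ a % d

private lemma mod_char_aux (d x y : ℕ) (hd : 0 < d) (hx : x < d) (hy : y < d) :
    (x + y) % d = if d ≤ x + y then x + y - d else x + y := by
  split_ifs with h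
  · rw [Nat.mod_eq_sub_mod h]
    exact Nat.mod_eq_of_lt (by omega)
  · exact Nat.mod_eq_of_lt (by omega)

/-- Correctness of the passively secure division protocol for general modulus `p`
and general public divisor `d`: the reconstructed output is always one of
`a/d`, `a/d + 1`, `a/d + 2`, with exact conditions. -/
theorem stmt_7 (p d a a₁ a₂ : ℕ) (hd : 1 ≤ d)
    (ha : a < p) (h1 : a₁ < p) (h2 : a₂ < p) (hshare : (a₁ + a₂) % p = a % p) :
    (condZero p d a a₁ → divOut p d a a₁ a₂ = ((a / d : ℕ) : ℤ)) ∧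
    (condTwo p d a a₁ → divOut p d a a₁ a₂ = ((a / d : ℕ) : ℤ) + 2) ∧
    (¬ condZero p d a a₁ → ¬ condTwo p d a a₁ →
      divOut p d a a₁ a₂ = ((a / d : ℕ) : ℤ) + 1) := by
  have hppos : 0 < p := by omega
  have hdpos : 0 < d := hd
  have hma : a % d < d := Nat.mod_lt _ hdpos
  have hm1 : a₁ % d < d := Nat.mod_lt _ hdpos
  have hm2 : a₂ % d < d := Nat.mod_lt _ hdpos
  have hmp : p % d < d := Nat.mod_lt _ hdpos
  -- the sharing sum is either a or a + p
  have hsumcase : a₁ + a₂ = a ∨ a₁ + a₂ = a + p := by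
    have h := Nat.div_add_mod (a₁ + a₂) p
    have hmod : a % p = a := Nat.mod_eq_of_lt ha
    rw [hshare, hmod] at h
    have hlt : (a₁ + a₂) / p < 2 := Nat.div_lt_of_lt_mul (by omega)
    obtain ⟨k, hk⟩ : ∃ k, (a₁ + a₂) / p = k := ⟨_, rfl⟩
    rw [hk] at h hlt
    clear hk
    have : k = 0 ∨ k = 1 := by omega
    rcases this with h0 | h0 <;> rw [h0] at h <;> omega
  -- the first summand of divOut
  have hE : (a₁ + (d - 1) - p % d) / d
      = a₁ / d + if p % d < a₁ % d then 1 else 0 := by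
    have e1 : a₁ + (d - 1) - p % d = a₁ + ((d - 1) - p % d) := by omega
    rw [e1, Nat.add_div hdpos,
      Nat.div_eq_of_lt (show (d - 1) - p % d < d by omega),
      Nat.mod_eq_of_lt (show (d - 1) - p % d < d by omega)]
    split_ifs <;> omega
  rcases hsumcase with hs | hs
  · -- q = 0 case
    have hq0 : (a₁ + a₂ - a) / p = 0 := by
      have : a₁ + a₂ - a = 0 := by omega
      rw [this, Nat.zero_div]
    have hdivs : a / d = a₁ / d + a₂ / d
        + if d ≤ a₁ % d + a₂ % d then 1 else 0 := by
      rw [← hs]; exact Nat.add_div hdpos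
    have hmods : a % d = (a₁ % d + a₂ % d) % d := by
      rw [← hs]; exact Nat.add_mod a₁ a₂ d
    rw [mod_char_aux d _ _ hdpos hm1 hm2] at hmods
    unfold divOut condZero condTwo
    rw [hq0, hE, hdivs]
    simp only [Nat.cast_zero, mul_zero, sub_zero]
    have hxa : a₁ ≤ a := by omega
    refine ⟨fun hc => ?_, fun hc => ?_, fun hc hc2 => ?_⟩ <;>
      split_ifs at hmods ⊢ <;> push_cast <;> omega
  · -- q = 1 case
    have hq1 : (a₁ + a₂ - a) / p = 1 := by
      have : a₁ + a₂ - a = p := by omega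
      rw [this, Nat.div_self hppos]
    have hxa : a < a₁ := by omega
    have hdivs : a₁ / d + a₂ / d + (if d ≤ a₁ % d + a₂ % d then 1 else 0)
        = a / d + p / d + if d ≤ a % d + p % d then 1 else 0 := by
      rw [← Nat.add_div hdpos, ← Nat.add_div hdpos, hs]
    have hmods : (a₁ % d + a₂ % d) % d = (a % d + p % d) % d := by
      rw [← Nat.add_mod, ← Nat.add_mod, hs]
    rw [mod_char_aux d _ _ hdpos hm1 hm2,
        mod_char_aux d _ _ hdpos hma hmp] at hmods
    unfold divOut condZero condTwo
    rw [hq1, hE]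
    simp only [Nat.cast_one, mul_one]
    refine ⟨fun hc => ?_, fun hc => ?_, fun hc hc2 => ?_⟩ <;>
      split_ifs at hdivs hmods ⊢ <;> push_cast <;> omega
end

section
/- Let p be an odd natural number and a an even natural number with a < p. Let a_1, a_2 be naturals with a_1 < p, a_2 < p and a_1 + a_2 ≡ a (mod p), and let q = (a_1 + a_2 − a)/p. Then q ∈ {0, 1} and q = (a_1 % 2 + a_2 % 2) % 2; that is, the quotient equals the XOR of the least significant bits of the two shares. -/
/-- Correctness of the two-share quotient transfer protocol (Protocol 9): when `p`
is odd and the secret `a` is even, the quotient `q = (a₁ + a₂ − a)/p ∈ {0, 1}`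
equals the XOR of the least significant bits of the two shares. -/
theorem stmt_8 (p a a₁ a₂ : ℕ) (hp : Odd p) (ha_even : Even a) (ha : a < p)
    (h1 : a₁ < p) (h2 : a₂ < p) (hshare : (a₁ + a₂) % p = a % p) :
    ((a₁ + a₂ - a) / p = 0 ∨ (a₁ + a₂ - a) / p = 1) ∧
    (a₁ + a₂ - a) / p = (a₁ % 2 + a₂ % 2) % 2 := by
  have hp0 : 0 < p := hp.pos
  have hma : a % p = a := Nat.mod_eq_of_lt ha
  have hdm := Nat.div_add_mod (a₁ + a₂) p
  rw [hshare, hma] at hdm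
  have hqle : (a₁ + a₂) / p ≤ 1 := by
    have : (a₁ + a₂) / p < 2 := Nat.div_lt_of_lt_mul (by omega)
    omega
  have hsub : a₁ + a₂ - a = p * ((a₁ + a₂) / p) := by omega
  have hdiv : (a₁ + a₂ - a) / p = (a₁ + a₂) / p := by
    rw [hsub, Nat.mul_div_cancel_left _ hp0]
  obtain ⟨k, hk⟩ := hp
  obtain ⟨m, hm⟩ := ha_even
  interval_cases h : ((a₁ + a₂) / p) <;> rw [hdiv] <;> omega
end

section
/- Let d ≥ 1 and a be natural numbers. Then the number of natural numbers x with x ≤ a and a % d < x % d equals (a/d)·(d − 1 − a % d). -/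
/-! Write `x = d * q + r` with `r < d`. For `x ≤ a`, the condition `a % d < x % d` forces
`q < a / d` (a shared quotient would give `x > a`), and conversely every `q < a / d` and
`a % d < r < d` yields such an `x`. So `x ↦ (x / d, x % d)` is a bijection onto
`range (a / d) ×ˢ Ioo (a % d) d`. -/

open Finset

theorem Nat.div_lt_div_of_le_of_mod_lt {d a x : ℕ} (hx : x ≤ a) (h : a % d < x % d) :
    x / d < a / d := by
  refine (Nat.div_le_div_right hx).lt_of_ne fun heq => ?_
  have hx' := Nat.div_add_mod x d
  have ha' := Nat.div_add_mod a d
  rw [heq] at hx'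
  omega

theorem Nat.mul_add_lt_of_lt_div {d a q r : ℕ} (hq : q < a / d) (hr : r < d) :
    d * q + r < a := by
  have hqd : (q + 1) * d ≤ a := (Nat.le_div_iff_mul_le (by omega)).1 hq
  linarith [add_one_mul q d, mul_comm q d]

theorem stmt_10_general (d a : ℕ) :
    ((Finset.range (a + 1)).filter (fun x => a % d < x % d)).card
      = (a / d) * (d - 1 - a % d) := by
  have hcard : #(range (a / d) ×ˢ Ioo (a % d) d) = a / d * (d - 1 - a % d) := by
    rw [card_product, card_range, Nat.card_Ioo, Nat.sub_right_comm]
  rw [← hcard]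
  refine card_nbij' (fun x => (x / d, x % d)) (fun p => d * p.1 + p.2) ?_ ?_ ?_ ?_
  · intro x hx
    simp only [mem_coe, mem_filter, mem_product, mem_range, mem_Ioo] at hx ⊢
    have hq := Nat.div_lt_div_of_le_of_mod_lt (Nat.lt_succ_iff.mp hx.1) hx.2
    have hd : 0 < d := Nat.pos_of_ne_zero (by rintro rfl; simp at hq)
    exact ⟨hq, hx.2, Nat.mod_lt x hd⟩
  · rintro ⟨q, r⟩ hqr
    simp only [mem_coe, mem_filter, mem_product, mem_range, mem_Ioo] at hqr ⊢
    obtain ⟨hq, har, hr⟩ := hqr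
    rw [Nat.mul_add_mod, Nat.mod_eq_of_lt hr]
    exact ⟨Nat.lt_succ_of_lt (Nat.mul_add_lt_of_lt_div hq hr), har⟩
  · intro x _
    exact Nat.div_add_mod x d
  · rintro ⟨q, r⟩ hqr
    simp only [mem_coe, mem_product, mem_range, mem_Ioo] at hqr
    have hd : 0 < d := by omega
    simp [Nat.mul_add_div hd, Nat.mod_eq_of_lt hqr.2.2, Nat.div_eq_of_lt hqr.2.2]

/-- Counting lemma from the output-distribution analysis: among `x ≤ a` (the
`q = 0` case), the number of those with `a % d < x % d` is `(a/d)·(d − 1 − a % d)`. -/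
theorem stmt_10 (d a : ℕ) (hd : 1 ≤ d) :
    ((Finset.range (a + 1)).filter (fun x => a % d < x % d)).card
      = (a / d) * (d - 1 - a % d) :=
  stmt_10_general d a
end

section
/- Let p, d be naturals with d ≥ 1 and p % d = d − 1, and let a be a natural with a < p. Then the number of natural numbers x with a < x < p and a % d ≤ x % d equals (p/d − a/d + 1)·(d − a % d) − 2. -/
lemma cnt_aux (d r : ℕ) (hd : 1 ≤ d) :
    ∀ n, ((Finset.range n).filter (fun x => r ≤ x % d)).card
      = (n / d) * (d - r) + (n % d - r) := by
  intro n
  induction n with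
  | zero => simp
  | succ n ih =>
    rw [Finset.range_add_one, Finset.filter_insert]
    have hlt : n % d < d := Nat.mod_lt n hd
    rcases Nat.lt_or_ge (n % d + 1) d with hm | hm
    · have h1 : (n + 1) % d = n % d + 1 := by
        rw [Nat.add_mod, Nat.mod_eq_of_lt (by omega : 1 < d), Nat.mod_eq_of_lt hm]
      have h2 : (n + 1) / d = n / d := by
        rw [Nat.succ_div, if_neg (fun hdvd => by
          have h0 : (n + 1) % d = 0 := Nat.mod_eq_zero_of_dvd hdvd
          omega), Nat.add_zero]
      by_cases hr2 : r ≤ n % d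
      · rw [if_pos hr2, Finset.card_insert_of_notMem (by simp), ih, h1, h2]; omega
      · rw [if_neg hr2, ih, h1, h2]; omega
    · have hm' : n % d + 1 = d := by omega
      have hdvd : d ∣ (n + 1) :=
        ⟨n / d + 1, by rw [Nat.mul_add, Nat.mul_one]; have := Nat.div_add_mod n d; omega⟩
      have h1 : (n + 1) % d = 0 := Nat.mod_eq_zero_of_dvd hdvd
      have h2 : (n + 1) / d = n / d + 1 := by rw [Nat.succ_div, if_pos hdvd]
      by_cases hr2 : r ≤ n % d
      · rw [if_pos hr2, Finset.card_insert_of_notMem (by simp), ih, h1, h2,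
          Nat.add_mul, Nat.one_mul]; omega
      · rw [if_neg hr2, ih, h1, h2, Nat.add_mul, Nat.one_mul]; omega

/-- Counting lemma from the output-distribution analysis (specific case
`p % d = d − 1`): among shares `a < x < p` (the `q = 1` case), the number of those
with `a % d ≤ x % d` is `(p/d − a/d + 1)·(d − a % d) − 2`. -/
theorem stmt_11 (p d a : ℕ) (hd : 1 ≤ d) (hpd : p % d = d - 1) (ha : a < p) :
    ((Finset.Ioo a p).filter (fun x => a % d ≤ x % d)).card
      = (p / d - a / d + 1) * (d - a % d) - 2 := by
  have hset : (Finset.Ioo a p).filter (fun x => a % d ≤ x % d)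
      = ((Finset.range p).filter (fun x => a % d ≤ x % d))
        \ ((Finset.range (a + 1)).filter (fun x => a % d ≤ x % d)) := by
    ext x
    simp only [Finset.mem_filter, Finset.mem_sdiff, Finset.mem_Ioo, Finset.mem_range]
    by_cases hq : a % d ≤ x % d <;> simp [hq] <;> omega
  rw [hset,
    Finset.card_sdiff_of_subset (Finset.filter_subset_filter _ (Finset.range_subset_range.mpr (by omega))),
    cnt_aux d (a % d) hd, cnt_aux d (a % d) hd]
  have hr : a % d < d := Nat.mod_lt a hd
  have hq : a / d ≤ p / d := Nat.div_le_div_right (le_of_lt ha)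
  have hq' : a / d * (d - a % d) ≤ p / d * (d - a % d) := Nat.mul_le_mul_right _ hq
  rcases Nat.lt_or_ge (a % d + 1) d with hm | hm
  · have h1 : (a + 1) % d = a % d + 1 := by
      rw [Nat.add_mod, Nat.mod_eq_of_lt (by omega : 1 < d), Nat.mod_eq_of_lt hm]
    have h2 : (a + 1) / d = a / d := by
      rw [Nat.succ_div, if_neg (fun hdvd => by
        have h0 : (a + 1) % d = 0 := Nat.mod_eq_zero_of_dvd hdvd
        omega), Nat.add_zero]
    rw [h1, h2, hpd, Nat.add_mul, Nat.sub_mul, Nat.one_mul]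
    omega
  · have hm' : a % d + 1 = d := by omega
    have hdvd : d ∣ (a + 1) :=
      ⟨a / d + 1, by rw [Nat.mul_add, Nat.mul_one]; have := Nat.div_add_mod a d; omega⟩
    have h1 : (a + 1) % d = 0 := Nat.mod_eq_zero_of_dvd hdvd
    have h2 : (a + 1) / d = a / d + 1 := by rw [Nat.succ_div, if_pos hdvd]
    have he : d - a % d = 1 := by omega
    rw [h1, h2, hpd, he, Nat.mul_one, Nat.mul_one, Nat.mul_one]
    omega
end

section
/- Let p, d be naturals with d ≥ 1 and p % d = d − 1, and let a be a natural with a < p. Then the number of naturals x with x < p satisfying ((x ≤ a and a % d < x % d) or (a < x and a % d ≤ x % d)) equals (a/d)·(d − 1 − a % d) + (p/d − a/d + 1)·(d − a % d) − 2, which equals p − (a % d)·(p/d + 1) − a/d − 1. Consequently, for a uniformly random share a_1 ∈ [0, p), the division protocol output equals a/d with probability (p − (a % d)·(p/d + 1) − a/d − 1)/p and equals a/d + 1 otherwise. -/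
private lemma divmod_unique (d k1 s1 k2 s2 : ℕ) (h1 : s1 < d) (h2 : s2 < d)
    (h : k1 * d + s1 = k2 * d + s2) : k1 = k2 ∧ s1 = s2 := by
  have hs : s1 = s2 := by
    have e1 : (s1 + k1 * d) % d = s1 % d := Nat.add_mul_mod_self_right s1 k1 d
    have e2 : (s2 + k2 * d) % d = s2 % d := Nat.add_mul_mod_self_right s2 k2 d
    rw [Nat.mod_eq_of_lt h1] at e1
    rw [Nat.mod_eq_of_lt h2] at e2
    have h' : s1 + k1 * d = s2 + k2 * d := by omega
    rw [h', e2] at e1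
    exact e1.symm
  subst hs
  have hk : k1 * d = k2 * d := by omega
  have hd0 : 0 < d := lt_of_le_of_lt (Nat.zero_le _) h1
  exact ⟨Nat.eq_of_mul_eq_mul_right hd0 hk, rfl⟩

/-- Output-distribution theorem for the passively secure division protocol in the
specific case `p % d = d − 1`: the number of shares `a₁ ∈ [0, p)` for which the
protocol output equals `a/d` is
`(a/d)·(d − 1 − a % d) + (p/d − a/d + 1)·(d − a % d) − 2 = p − (a % d)·(p/d + 1) − a/d − 1`;
consequently, for a uniformly random share the output is `a/d` with probability
`(p − (a % d)·(p/d + 1) − a/d − 1)/p` and `a/d + 1` otherwise. -/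
theorem stmt_12 (p d a : ℕ) (hd : 1 ≤ d) (hpd : p % d = d - 1) (ha : a < p) :
    ((Finset.range p).filter
        (fun x => (x ≤ a ∧ a % d < x % d) ∨ (a < x ∧ a % d ≤ x % d))).card
      = (a / d) * (d - 1 - a % d) + (p / d - a / d + 1) * (d - a % d) - 2 ∧
    (a / d) * (d - 1 - a % d) + (p / d - a / d + 1) * (d - a % d) - 2
      = p - (a % d) * (p / d + 1) - a / d - 1 ∧
    (((Finset.range p).filter
        (fun x => (x ≤ a ∧ a % d < x % d) ∨ (a < x ∧ a % d ≤ x % d))).card : ℚ) / p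
      = ((p - (a % d) * (p / d + 1) - a / d - 1 : ℕ) : ℚ) / p ∧
    (((Finset.range p).filter
        (fun x => ¬ ((x ≤ a ∧ a % d < x % d) ∨ (a < x ∧ a % d ≤ x % d)))).card : ℚ) / p
      = 1 - ((p - (a % d) * (p / d + 1) - a / d - 1 : ℕ) : ℚ) / p := by
  have hd0 : 0 < d := hd
  set r := a % d with hr
  set q := a / d with hq
  set Q := p / d with hQ
  have hrd : r < d := Nat.mod_lt a hd0
  have hadm : q * d + r = a := by
    rw [hq, hr, Nat.mul_comm]; exact Nat.div_add_mod a d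
  have hpdm : Q * d + (d - 1) = p := by
    have h := Nat.div_add_mod p d
    rw [hpd] at h
    rw [hQ, Nat.mul_comm]
    exact h
  have hqQ : q ≤ Q := by
    rw [hq, hQ]; exact Nat.div_le_div_right (le_of_lt ha)
  -- complement set description
  set A : Finset ℕ :=
    (Finset.range (Q + 1) ×ˢ Finset.range r).image (fun z : ℕ × ℕ => z.1 * d + z.2) with hA
  set B : Finset ℕ := (Finset.range (q + 1)).image (fun k => k * d + r) with hB
  have hfilterneg :
      (Finset.range p).filter
        (fun x => ¬ ((x ≤ a ∧ r < x % d) ∨ (a < x ∧ r ≤ x % d))) = A ∪ B := by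
    ext x
    simp only [Finset.mem_filter, Finset.mem_range, Finset.mem_union, hA, hB,
      Finset.mem_image, Finset.mem_product, Prod.exists]
    constructor
    · rintro ⟨hxp, hnp⟩
      push_neg at hnp
      have hxdm : (x / d) * d + x % d = x := by
        rw [Nat.mul_comm]; exact Nat.div_add_mod x d
      have hxmd : x % d < d := Nat.mod_lt x hd0
      have hxQ : x / d ≤ Q := by rw [hQ]; exact Nat.div_le_div_right (le_of_lt hxp)
      rcases lt_trichotomy (x % d) r with hlt | heq | hgt
      · exact Or.inl ⟨x / d, x % d, ⟨by omega, hlt⟩, hxdm⟩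
      · right
        have hxa : x ≤ a := by
          rcases le_or_gt x a with h1 | h1
          · exact h1
          · have := hnp.2 h1; omega
        have hkq : x / d ≤ q := by rw [hq]; exact Nat.div_le_div_right hxa
        refine ⟨x / d, by omega, by omega⟩
      · exfalso
        rcases le_or_gt x a with h1 | h1
        · have := hnp.1 h1; omega
        · have := hnp.2 h1; omega
    · have hmodA : ∀ k s : ℕ, s < d → (k * d + s) % d = s := by
        intro k s hs
        rw [Nat.add_comm, Nat.add_mul_mod_self_right, Nat.mod_eq_of_lt hs]
      rintro (⟨k, s, ⟨hk, hs⟩, rfl⟩ | ⟨k, hk, rfl⟩)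
      · have hkQ : k ≤ Q := by omega
        have hkd : k * d ≤ Q * d := Nat.mul_le_mul_right d hkQ
        have hxm : (k * d + s) % d = s := hmodA k s (by omega)
        refine ⟨by omega, ?_⟩
        rw [hxm]
        omega
      · have hkq : k ≤ q := by omega
        have hkd : k * d ≤ q * d := Nat.mul_le_mul_right d hkq
        have hxm : (k * d + r) % d = r := hmodA k r hrd
        have hxa : k * d + r ≤ a := by omega
        refine ⟨by omega, ?_⟩
        rw [hxm]
        omega
  have hcardA : A.card = (Q + 1) * r := by
    rw [hA, Finset.card_image_of_injOn, Finset.card_product, Finset.card_range,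
      Finset.card_range]
    intro z1 hz1 z2 hz2 hz
    simp only [Finset.mem_coe, Finset.mem_product, Finset.mem_range] at hz1 hz2
    have := divmod_unique d z1.1 z1.2 z2.1 z2.2 (by omega) (by omega) hz
    exact Prod.ext this.1 this.2
  have hcardB : B.card = q + 1 := by
    rw [hB, Finset.card_image_of_injOn, Finset.card_range]
    intro k1 _ k2 _ hz
    exact (divmod_unique d k1 r k2 r hrd hrd hz).1
  have hdisj : Disjoint A B := by
    rw [Finset.disjoint_left]
    intro x hxA hxB
    rw [hA, Finset.mem_image] at hxA
    rw [hB, Finset.mem_image] at hxB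
    obtain ⟨z, hz, hzx⟩ := hxA
    obtain ⟨k, hk, hkx⟩ := hxB
    simp only [Finset.mem_product, Finset.mem_range] at hz
    have := divmod_unique d z.1 z.2 k r (by omega) hrd (by rw [hzx, hkx])
    omega
  have hcomp :
      ((Finset.range p).filter
        (fun x => ¬ ((x ≤ a ∧ r < x % d) ∨ (a < x ∧ r ≤ x % d)))).card
      = r * (Q + 1) + (q + 1) := by
    rw [hfilterneg, Finset.card_union_of_disjoint hdisj, hcardA, hcardB, Nat.mul_comm]
  -- total split
  have hsplit :
      ((Finset.range p).filter
        (fun x => (x ≤ a ∧ r < x % d) ∨ (a < x ∧ r ≤ x % d))).card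
      + (r * (Q + 1) + (q + 1)) = p := by
    rw [← hcomp, Finset.card_filter_add_card_filter_not, Finset.card_range]
  -- arithmetic
  obtain ⟨m, hm⟩ : ∃ m, Q = q + m := ⟨Q - q, by omega⟩
  obtain ⟨e, he⟩ : ∃ e, d = r + e + 1 := ⟨d - r - 1, by omega⟩
  have hm0 : m = 0 → 1 ≤ e := by
    intro h0
    have hQq : Q = q := by omega
    rw [hQq] at hpdm
    omega
  have hT2 : 2 ≤ q * e + (m + 1) * (e + 1) := by
    rcases Nat.eq_zero_or_pos m with h0 | h0
    · have := hm0 h0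
      nlinarith
    · nlinarith
  have hkey : p + 1 = q * e + (m + 1) * (e + 1) + r * (Q + 1) + q := by
    have hp1 : p + 1 = (Q + 1) * (r + e + 1) := by
      rw [← hpdm, he]; ring_nf; omega
    rw [hp1, hm]
    ring
  have hsubst1 : d - 1 - r = e := by omega
  have hsubst2 : d - r = e + 1 := by omega
  have hsubst3 : Q - q + 1 = m + 1 := by omega
  rw [hsubst1, hsubst2, hsubst3]
  -- make everything opaque/linear for omega
  clear hfilterneg hcardA hcardB hdisj hA hB
  clear_value r q Q A B
  clear hr hq hQ
  generalize hT : q * e + (m + 1) * (e + 1) = T at hT2 hkey ⊢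
  generalize hU : r * (Q + 1) = U at hkey hsplit hcomp ⊢
  have hcard1 :
      ((Finset.range p).filter
        (fun x => (x ≤ a ∧ r < x % d) ∨ (a < x ∧ r ≤ x % d))).card
      = T - 2 := by omega
  have harith2 : T - 2 = p - U - q - 1 := by omega
  refine ⟨hcard1, harith2, ?_, ?_⟩
  · rw [hcard1, harith2]
  · have hp0 : 0 < p := by omega
    rw [hcomp]
    have h1 : r * (Q + 1) = U := hU
    have hval : U + (q + 1) = p - (p - U - q - 1) := by omega
    rw [hval]
    have hle : p - U - q - 1 ≤ p := by omega
    rw [Nat.cast_sub hle]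
    have hpQ : (p : ℚ) ≠ 0 := by positivity
    field_simp
end

section
/- Let b be a real with 1/2 ≤ b ≤ 1. Define the sequence y_0 = 1 and y_{n+1} = y_n·(3 − b·y_n²)/2. Then for every natural n: 0 ≤ 1 − √b·y_n ≤ 2^{−2^n}. -/
/-- Quantitative fast-convergence claim for the Newton iteration used in the secure
inverse-square-root protocol (Protocol 5): for `b ∈ [1/2, 1]`, starting from the
initial guess `1`, the iteration `y ↦ y(3 − b y²)/2` converges to `1/√b` doubly
exponentially, gaining `2^n` bits of accuracy after `n` iterations. -/
theorem stmt_16 (b : ℝ) (hb0 : 1 / 2 ≤ b) (hb1 : b ≤ 1) (y : ℕ → ℝ)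
    (hy0 : y 0 = 1) (hy : ∀ n, y (n + 1) = y n * (3 - b * (y n) ^ 2) / 2) :
    ∀ n, 0 ≤ 1 - Real.sqrt b * y n ∧
      1 - Real.sqrt b * y n ≤ (2 : ℝ) ^ (-(2 ^ n : ℤ)) := by
  have hb0' : (0:ℝ) ≤ b := by linarith
  set s := Real.sqrt b with hs
  have hsb : s ^ 2 = b := Real.sq_sqrt hb0'
  have hsnn : 0 ≤ s := Real.sqrt_nonneg b
  have hKey : ∀ n, 0 ≤ 1 - s * y n ∧ 1 - s * y n ≤ 2/3 * (2:ℝ) ^ (-(2 ^ n : ℤ)) := by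
    intro n
    induction n with
    | zero =>
      rw [hy0]
      have hle1 : s ≤ 1 := by nlinarith
      have hge : (2:ℝ)/3 ≤ s := by nlinarith
      constructor
      · linarith
      · norm_num; linarith
    | succ n ih =>
      obtain ⟨h1, h2⟩ := ih
      set B : ℝ := (2:ℝ) ^ (-(2 ^ n : ℤ)) with hB
      have hBpos : 0 < B := by positivity
      have hBle : B ≤ 1/2 := by
        rw [hB]
        calc (2:ℝ) ^ (-(2 ^ n : ℤ)) ≤ (2:ℝ) ^ (-1 : ℤ) := by
              apply zpow_le_zpow_right₀ (by norm_num)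
              have : (1:ℤ) ≤ 2 ^ n := one_le_pow₀ (by norm_num)
              omega
          _ = 1/2 := by norm_num
      have hrec : 1 - s * y (n+1) = (1 - s * y n)^2 * (3 - (1 - s * y n)) / 2 := by
        rw [hy n, ← hsb]; ring
      have hB2 : (2:ℝ) ^ (-(2 ^ (n+1) : ℤ)) = B ^ 2 := by
        rw [hB, ← zpow_natCast ((2:ℝ) ^ (-(2 ^ n : ℤ))) 2, ← zpow_mul]
        congr 1
        push_cast
        ring
      set e : ℝ := 1 - s * y n with he
      have he13 : e ≤ 1/3 := by nlinarith
      constructor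
      · rw [hrec]; nlinarith
      · rw [hrec, hB2]
        nlinarith [sq_nonneg e, mul_pos hBpos hBpos]
  intro n
  obtain ⟨h1, h2⟩ := hKey n
  have : (0:ℝ) ≤ (2:ℝ) ^ (-(2 ^ n : ℤ)) := by positivity
  exact ⟨h1, by linarith⟩
end

section
/- Let ℓ be a natural number and a an integer with −2^ℓ < a < 2^ℓ. Set a' = 2^{ℓ+1} + a and s = ⌊a'/2^{ℓ+1}⌋ (floor division over ℤ). Then s = 1 if a ≥ 0 and s = 0 if a < 0; moreover ((1 − s)·2^{ℓ+1} + (2s − 1)·a') mod 2^ℓ = |a|, where mod denotes the remainder in [0, 2^ℓ). -/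
/-- Correctness of the sign-and-absolute-value extraction protocol (Protocol 13):
for `a' = 2^{ℓ+1} + a`, the bit `s = ⌊a'/2^{ℓ+1}⌋` indicates the sign of `a`, and
the least `ℓ` bits of `(1 − s)·2^{ℓ+1} + (2s − 1)·a'` equal `|a|`. -/
theorem stmt_19 (ℓ : ℕ) (a : ℤ) (hlo : -2 ^ ℓ < a) (hhi : a < 2 ^ ℓ) :
    (0 ≤ a → (2 ^ (ℓ + 1) + a) / 2 ^ (ℓ + 1) = 1) ∧
    (a < 0 → (2 ^ (ℓ + 1) + a) / 2 ^ (ℓ + 1) = 0) ∧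
    ((1 - (2 ^ (ℓ + 1) + a) / 2 ^ (ℓ + 1)) * 2 ^ (ℓ + 1) +
        (2 * ((2 ^ (ℓ + 1) + a) / 2 ^ (ℓ + 1)) - 1) * (2 ^ (ℓ + 1) + a)) % 2 ^ ℓ
      = |a| := by
  have hp : (0:ℤ) < 2 ^ ℓ := by positivity
  have hpow : (2:ℤ) ^ (ℓ + 1) = 2 * 2 ^ ℓ := by ring
  rcases le_or_gt 0 a with h | h
  · have hs : (2 ^ (ℓ + 1) + a) / 2 ^ (ℓ + 1) = 1 := by
      have : 2 ^ (ℓ + 1) + a = a + 1 * 2 ^ (ℓ + 1) := by ring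
      rw [this, Int.add_mul_ediv_right _ _ (by positivity : (2:ℤ)^(ℓ+1) ≠ 0),
        Int.ediv_eq_zero_of_lt h (by rw [hpow]; linarith), zero_add]
    refine ⟨fun _ => hs, fun h' => absurd h (not_le.mpr h'), ?_⟩
    rw [hs]
    have : (1 - 1) * 2 ^ (ℓ + 1) + (2 * 1 - 1) * (2 ^ (ℓ + 1) + a)
        = a + 2 ^ ℓ * 2 := by rw [hpow]; ring
    rw [this, Int.add_mul_emod_self_left, Int.emod_eq_of_lt h hhi, abs_of_nonneg h]
  · have hs : (2 ^ (ℓ + 1) + a) / 2 ^ (ℓ + 1) = 0 := by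
      apply Int.ediv_eq_zero_of_lt
      · rw [hpow]; linarith
      · linarith
    refine ⟨fun h' => absurd h (not_lt.mpr h'), fun _ => hs, ?_⟩
    rw [hs]
    have : (1 - 0) * 2 ^ (ℓ + 1) + (2 * 0 - 1) * (2 ^ (ℓ + 1) + a)
        = -a := by ring
    rw [this, Int.emod_eq_of_lt (by linarith) (by linarith), abs_of_neg h]
end
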